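/- arXiv:1308.4745 — 5 statements merged into one kernel-verified Lean document; each statement's English description precedes it below -/
import Mathlib

section
/- For a complex n×n matrix F, the Taylor coefficients of α ↦ det(I − αF) are given by det(I − αF) = Σ_{m=0}^n (a_m/m!) α^m, where a_m = (−1)^m det of the m×m matrix whose (i,j) entry is Tr(F^{i−j+1}) if i ≥ j, equals m−i if j = i+1, and 0 if j > i+1 (the Plemelj–Smithies formula). -/
/-- The Plemelj–Smithies coefficient `a_m = (-1)^m det` of the `m × m` matrix whose
`(i,j)` entry (0-indexed) is `Tr(F^{i-j+1})` for `i ≥ j`, `m-1-i` on the superdiagonal,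
and `0` above the superdiagonal. -/
noncomputable def plemeljCoeff {n : ℕ} (F : Matrix (Fin n) (Fin n) ℂ) (m : ℕ) : ℂ :=
  (-1) ^ m * Matrix.det (Matrix.of fun i j : Fin m =>
    if (j : ℕ) ≤ (i : ℕ) then Matrix.trace (F ^ ((i : ℕ) - (j : ℕ) + 1))
    else if (j : ℕ) = (i : ℕ) + 1 then ((m - 1 - (i : ℕ) : ℕ) : ℂ) else 0)

/-!
Over `ℂ` the characteristic polynomial of `F` splits; let `λ` run through its roots. Evaluating
`det (p F) = ∏ p λ` at `p = 1 - αX` and at `p = x - X^k` gives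
`det (1 - αF) = ∑ (-1)^m e_m(λ) α^m` and `Tr (F^k) = ∑ λ^k`. Expanding the Plemelj–Smithies
determinant along its first row gives a recursion which, by Newton's identities
`(m+1) e_{m+1} = ∑ (-1)^k p_{k+1} e_{m-k}`, is solved by `m! e_m`; hence `a_m = (-1)^m m! e_m(λ)`.
-/

open Matrix Finset Polynomial
open scoped Nat

lemma Fin.val_succAbove_one {m : ℕ} (k : Fin (m + 1)) :
    ((Fin.succAbove 1 k : Fin (m + 2)) : ℕ) = if (k : ℕ) = 0 then 0 else (k : ℕ) + 1 := by
  simp only [Fin.succAbove, Fin.lt_def]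
  split_ifs <;> simp_all

section Hessenberg

variable {R : Type*} [CommRing R]

/-- With first column `p (i + j + 1)` instead of `p (i + 1)`, this family is closed under
expansion along the first row: the two nonzero minors are the cases `j = 0` and `j + 1`. -/
noncomputable def plemeljMatrix (p : ℕ → R) (j m : ℕ) : Matrix (Fin m) (Fin m) R :=
  Matrix.of fun i k =>
    if (k : ℕ) = 0 then p ((i : ℕ) + j + 1)
    else if (k : ℕ) ≤ (i : ℕ) then p ((i : ℕ) - (k : ℕ) + 1)
    else if (k : ℕ) = (i : ℕ) + 1 then ((m - 1 - (i : ℕ) : ℕ) : R) else 0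

lemma plemeljMatrix_submatrix_succ_zero (p : ℕ → R) (j m : ℕ) :
    (plemeljMatrix p j (m + 1)).submatrix Fin.succ (Fin.succAbove 0) = plemeljMatrix p 0 m := by
  ext i k
  simp only [plemeljMatrix, submatrix_apply, of_apply, Fin.succAbove_zero, Fin.val_succ]
  split_ifs <;> first | rfl | (exfalso; omega) | (congr 1; omega)

lemma plemeljMatrix_submatrix_succ_one (p : ℕ → R) (j m : ℕ) :
    (plemeljMatrix p j (m + 2)).submatrix Fin.succ (Fin.succAbove 1) =
      plemeljMatrix p (j + 1) (m + 1) := by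
  ext i k
  simp only [plemeljMatrix, submatrix_apply, of_apply, Fin.val_succ, Fin.val_succAbove_one]
  split_ifs <;> first | rfl | (exfalso; omega) | (congr 1; omega)

lemma det_plemeljMatrix_succ_succ (p : ℕ → R) (j m : ℕ) :
    (plemeljMatrix p j (m + 2)).det =
      p (j + 1) * (plemeljMatrix p 0 (m + 1)).det -
        (m + 1 : ℕ) * (plemeljMatrix p (j + 1) (m + 1)).det := by
  rw [det_succ_row_zero, Fin.sum_univ_succ, Fin.sum_univ_succ, Finset.sum_eq_zero, add_zero,
    plemeljMatrix_submatrix_succ_zero, Fin.succ_zero_eq_one, plemeljMatrix_submatrix_succ_one]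
  · simp [plemeljMatrix]
    ring
  · intro k _
    simp [plemeljMatrix]

theorem det_plemeljMatrix_succ (p e : ℕ → R) (he : e 0 = 1)
    (newton : ∀ m : ℕ, ((m + 1 : ℕ) : R) * e (m + 1) =
      ∑ k ∈ range (m + 1), (-1) ^ k * p (k + 1) * e (m - k)) (m j : ℕ) :
    (plemeljMatrix p j (m + 1)).det =
      m ! * ∑ k ∈ range (m + 1), (-1) ^ k * p (j + k + 1) * e (m - k) := by
  induction m generalizing j with
  | zero => simp [plemeljMatrix, he]
  | succ m ih =>
    have first_row : ∑ k ∈ range (m + 1), (-1) ^ k * p (0 + k + 1) * e (m - k) =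
        ((m + 1 : ℕ) : R) * e (m + 1) := by
      simp only [zero_add, newton]
    have shift : ∑ k ∈ range (m + 2), (-1) ^ k * p (j + k + 1) * e (m + 1 - k) =
        p (j + 1) * e (m + 1) -
          ∑ k ∈ range (m + 1), (-1) ^ k * p (j + 1 + k + 1) * e (m - k) := by
      rw [sum_range_succ', sub_eq_neg_add, ← sum_neg_distrib]
      congr 1
      · refine sum_congr rfl fun k _ => ?_
        rw [Nat.add_sub_add_right, add_right_comm j 1 k, ← add_assoc, pow_succ]
        ring
      · simp
    rw [det_plemeljMatrix_succ_succ, ih, ih, first_row, shift, Nat.factorial_succ]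
    push_cast
    ring

theorem det_plemeljMatrix_zero (p e : ℕ → R) (he : e 0 = 1)
    (newton : ∀ m : ℕ, ((m + 1 : ℕ) : R) * e (m + 1) =
      ∑ k ∈ range (m + 1), (-1) ^ k * p (k + 1) * e (m - k)) (m : ℕ) :
    (plemeljMatrix p 0 m).det = m ! * e m := by
  cases m with
  | zero => simp [he]
  | succ m =>
    simp only [det_plemeljMatrix_succ p e he newton, zero_add, ← newton, Nat.factorial_succ]
    push_cast
    ring

end Hessenberg

theorem Multiset.esymm_zero {R : Type*} [CommSemiring R] (s : Multiset R) : s.esymm 0 = 1 := by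
  simp [Multiset.esymm, Multiset.powersetCard_zero_left]

theorem Multiset.mul_esymm_succ_eq_sum {R : Type*} [CommRing R] (s : Multiset R) (m : ℕ) :
    ((m + 1 : ℕ) : R) * s.esymm (m + 1) =
      ∑ k ∈ Finset.range (m + 1), (-1) ^ k * (s.map (· ^ (k + 1))).sum * s.esymm (m - k) := by
  classical
  have psum_eq (k : ℕ) : ∑ x : s, (x : R) ^ k = (s.map (· ^ k)).sum := by
    rw [Finset.sum_eq_multiset_sum]
    exact congrArg Multiset.sum (Multiset.map_univ s (· ^ k))
  have h := congrArg (MvPolynomial.aeval fun x : s => (x : R))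
    (MvPolynomial.mul_esymm_eq_sum s R (m + 1))
  simp only [map_mul, map_natCast, map_pow, map_neg, map_one, map_sum,
    MvPolynomial.aeval_esymm_eq_multiset_esymm, Multiset.map_univ_coe, MvPolynomial.psum,
    MvPolynomial.aeval_X, psum_eq] at h
  rw [h, sum_filter, Nat.sum_antidiagonal_succ', if_neg (lt_irrefl _), zero_add,
    ← Nat.sum_antidiagonal_eq_sum_range_succ
      fun i j => (-1) ^ i * (s.map (· ^ (i + 1))).sum * s.esymm j,
    ← Nat.sum_antidiagonal_swap, mul_sum]
  refine sum_congr rfl fun ⟨i, j⟩ hij => ?_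
  obtain rfl : i + j = m := Finset.HasAntidiagonal.mem_antidiagonal.mp hij
  have sq_sign : ((-1 : R) ^ j) ^ 2 = 1 := by rw [← pow_mul, pow_mul', neg_one_sq, one_pow]
  simp only [Prod.swap, if_pos (show j < i + j + 1 by omega)]
  linear_combination (-1 : R) ^ i * (s.map (· ^ (i + 1))).sum * s.esymm j * sq_sign

theorem Multiset.prod_map_one_sub_mul_eq_sum_esymm {R : Type*} [CommRing R] (s : Multiset R)
    (α : R) : (s.map fun r => 1 - α * r).prod =
      ∑ m ∈ Finset.range (card s + 1), (-1) ^ m * s.esymm m * α ^ m := by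
  have h := congrArg (eval 1) (prod_X_add_C_eq_sum_esymm (s.map ((-α) • ·)))
  simp only [eval_multiset_prod, Multiset.map_map, Function.comp_def, eval_add, eval_X, eval_C,
    eval_finsetSum, eval_mul, eval_pow, one_pow, mul_one, Multiset.card_map, ← pow_smul_esymm] at h
  simp only [smul_eq_mul, neg_mul, ← sub_eq_add_neg] at h
  rw [h]
  exact sum_congr rfl fun m _ => by ring

theorem Matrix.det_aeval_eq_prod_roots_charpoly {K ι : Type*} [Field K] [IsAlgClosed K]
    [Fintype ι] [DecidableEq ι] (A : Matrix ι ι K) (p : K[X]) :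
    (aeval A p).det = (A.charpoly.roots.map fun r => p.eval r).prod := by
  have card_roots : Multiset.card A.charpoly.roots = Fintype.card ι := by
    rw [IsAlgClosed.card_roots_eq_natDegree, charpoly_natDegree_eq_dim]
  have det_algebraMap (s : K) : (algebraMap K (Matrix ι ι K) s).det = s ^ Fintype.card ι := by
    simp [algebraMap_eq_diagonal]
  have det_sub_algebraMap (s : K) :
      (A - algebraMap K _ s).det = (A.charpoly.roots.map fun r => r - s).prod := by
    change (A - scalar ι s).det = _
    rw [← neg_sub, det_neg, ← eval_charpoly,
      (IsAlgClosed.splits _).eval_eq_prod_roots_of_monic A.charpoly_monic, ← card_roots,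
      ← Multiset.card_map (fun r => s - r), ← Multiset.prod_map_neg, Multiset.map_map]
    simp
  let detAeval : K[X] →* K := detMonoidHom.comp (aeval A).toMonoidHom
  have detAeval_apply (q : K[X]) : detAeval q = (aeval A q).det := rfl
  rw [← detAeval_apply]
  simp only [(IsAlgClosed.splits p).eval_eq_prod_roots, Multiset.prod_map_mul, Multiset.map_const',
    Multiset.prod_replicate, card_roots]
  conv_lhs => rw [(IsAlgClosed.splits p).eq_prod_roots]
  rw [map_mul, map_multiset_prod, Multiset.map_map]
  simp only [Function.comp_def, detAeval_apply, map_sub, aeval_X, aeval_C, det_algebraMap,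
    det_sub_algebraMap]
  rw [Multiset.prod_map_prod_map]

theorem Matrix.trace_pow_eq_sum_roots_charpoly {K ι : Type*} [Field K] [IsAlgClosed K]
    [Fintype ι] [DecidableEq ι] (A : Matrix ι ι K) (k : ℕ) :
    (A ^ k).trace = (A.charpoly.roots.map (· ^ k)).sum := by
  have charpoly_pow : (A ^ k).charpoly = ((A.charpoly.roots.map (· ^ k)).map (X - C ·)).prod := by
    refine Polynomial.funext fun x => ?_
    have h := A.det_aeval_eq_prod_roots_charpoly (C x - X ^ k)
    simp only [map_sub, aeval_C, aeval_X_pow, eval_sub, eval_C, eval_pow, eval_X] at h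
    rw [eval_charpoly, eval_multiset_prod, Multiset.map_map, Multiset.map_map]
    simp only [Function.comp_def, eval_sub, eval_X, eval_C]
    exact h
  rw [trace_eq_sum_roots_charpoly, charpoly_pow, roots_multiset_prod_X_sub_C]

theorem Matrix.det_one_sub_smul_eq_sum_esymm {K ι : Type*} [Field K] [IsAlgClosed K]
    [Fintype ι] [DecidableEq ι] (A : Matrix ι ι K) (α : K) :
    (1 - α • A).det =
      ∑ m ∈ range (Fintype.card ι + 1), (-1) ^ m * A.charpoly.roots.esymm m * α ^ m := by
  have h := A.det_aeval_eq_prod_roots_charpoly (1 - C α * X)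
  simp only [map_sub, map_one, map_mul, aeval_C, aeval_X, ← Algebra.smul_def, eval_sub, eval_one,
    eval_mul, eval_C, eval_X] at h
  rw [h, Multiset.prod_map_one_sub_mul_eq_sum_esymm, IsAlgClosed.card_roots_eq_natDegree,
    charpoly_natDegree_eq_dim]

lemma plemeljCoeff_eq_det_plemeljMatrix {n : ℕ} (F : Matrix (Fin n) (Fin n) ℂ) (m : ℕ) :
    plemeljCoeff F m = (-1) ^ m * (plemeljMatrix (fun k => (F ^ k).trace) 0 m).det := by
  unfold plemeljCoeff plemeljMatrix
  congr 3
  ext i j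
  split_ifs <;> first | rfl | (exfalso; omega) | (congr 2; omega)

lemma plemeljCoeff_eq {n : ℕ} (F : Matrix (Fin n) (Fin n) ℂ) (m : ℕ) :
    plemeljCoeff F m = (-1) ^ m * m ! * F.charpoly.roots.esymm m := by
  rw [plemeljCoeff_eq_det_plemeljMatrix, det_plemeljMatrix_zero _ _ (Multiset.esymm_zero _),
    mul_assoc]
  intro k
  simp only [F.trace_pow_eq_sum_roots_charpoly]
  exact Multiset.mul_esymm_succ_eq_sum _ k

/-- Plemelj–Smithies formula: `det(I - αF) = ∑_{m=0}^n (a_m/m!) α^m`. -/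
theorem stmt_4 {n : ℕ} (F : Matrix (Fin n) (Fin n) ℂ) (α : ℂ) :
    Matrix.det (1 - α • F) =
      ∑ m ∈ Finset.range (n + 1),
        (plemeljCoeff F m / (Nat.factorial m : ℂ)) * α ^ m := by
  rw [F.det_one_sub_smul_eq_sum_esymm, Fintype.card_fin]
  refine sum_congr rfl fun m _ => ?_
  have : (m ! : ℂ) ≠ 0 := by exact_mod_cast m.factorial_ne_zero
  rw [plemeljCoeff_eq]
  field_simp
end

section
/- For 0 ≤ e < 1, ∫_{−π/2}^{π/2} (e cos s)/(1 + e cos s) ds = π − (4/√(1−e²)) · arctan(√((1−e)/(1+e))). -/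
/-!
Write the integrand as `1 - 1 / (1 + e cos s)`. The Weierstrass substitution `t = tan (s / 2)`
turns `1 + e cos s` into `((1 + e) + (1 - e) t²) / (1 + t²)`, so
`2 / √(1 - e²) · arctan (√((1 - e) / (1 + e)) · tan (s / 2))` is an antiderivative of
`1 / (1 + e cos s)` on `(-π, π)`; at `s = ±π/2` we have `tan (s / 2) = ±1`.
-/

open Real intervalIntegral

namespace Real

lemma one_add_mul_cos_pos {e : ℝ} (he : |e| < 1) (s : ℝ) : 0 < 1 + e * cos s := by
  have hmul : |e * cos s| ≤ |e| := by
    rw [abs_mul]; exact mul_le_of_le_one_right (abs_nonneg e) (abs_cos_le_one s)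
  linarith [neg_abs_le (e * cos s)]

lemma one_add_mul_cos_eq_half_angle (e s : ℝ) :
    1 + e * cos s = (1 + e) * cos (s / 2) ^ 2 + (1 - e) * sin (s / 2) ^ 2 := by
  have hcos : cos s = cos (s / 2) ^ 2 - sin (s / 2) ^ 2 := by
    rw [← cos_two_mul', mul_div_cancel₀ s two_ne_zero]
  rw [hcos]
  linear_combination (sin_sq_add_cos_sq (s / 2)).symm

lemma continuous_one_div_one_add_mul_cos {e : ℝ} (he : |e| < 1) :
    Continuous fun s => 1 / (1 + e * cos s) :=
  continuous_const.div (by fun_prop) fun s => (one_add_mul_cos_pos he s).ne'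

lemma hasDerivAt_arctan_mul_tan_half {e s : ℝ} (he : |e| < 1)
    (hs : cos (s / 2) ≠ 0) :
    HasDerivAt (fun x => 2 / √(1 - e ^ 2) * arctan (√((1 - e) / (1 + e)) * tan (x / 2)))
      (1 / (1 + e * cos s)) s := by
  have hp : 0 < 1 + e := by linarith [neg_abs_le e]
  have hm : 0 < 1 - e := by linarith [le_abs_self e]
  set a := √(1 - e)
  set b := √(1 + e)
  have ha : 0 < a := sqrt_pos.mpr hm
  have hb : 0 < b := sqrt_pos.mpr hp
  have ha2 : a ^ 2 = 1 - e := sq_sqrt hm.le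
  have hb2 : b ^ 2 = 1 + e := sq_sqrt hp.le
  have hab : √(1 - e ^ 2) = a * b := by
    rw [← sqrt_mul hm.le]; ring_nf
  rw [hab, sqrt_div hm.le]
  have htan : HasDerivAt (fun x => tan (x / 2)) (1 / cos (s / 2) ^ 2 * (1 / 2)) s :=
    (hasDerivAt_tan hs).comp (h := fun x => x / 2) s ((hasDerivAt_id' s).div_const 2)
  refine (((hasDerivAt_arctan _).comp s (htan.const_mul (a / b))).const_mul
    (2 / (a * b))).congr_deriv ?_
  rw [one_add_mul_cos_eq_half_angle, ← ha2, ← hb2, tan_eq_sin_div_cos]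
  field_simp

lemma integral_one_div_one_add_mul_cos {e : ℝ} (he : |e| < 1) :
    ∫ s in (-(π / 2))..(π / 2), 1 / (1 + e * cos s) =
      4 / √(1 - e ^ 2) * arctan √((1 - e) / (1 + e)) := by
  rw [integral_eq_sub_of_hasDerivAt (fun s hs => hasDerivAt_arctan_mul_tan_half he ?_)
    ((continuous_one_div_one_add_mul_cos he).intervalIntegrable _ _)]
  · rw [show π / 2 / 2 = π / 4 by ring, show -(π / 2) / 2 = -(π / 4) by ring, tan_neg,
      tan_pi_div_four, mul_one, mul_neg_one, arctan_neg]
    ring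
  · rw [Set.uIcc_of_le (by linarith [pi_pos])] at hs
    exact (cos_pos_of_mem_Ioo ⟨by linarith [hs.1, pi_pos], by linarith [hs.2, pi_pos]⟩).ne'

end Real

/-- For `0 ≤ e < 1`,
`∫_{-π/2}^{π/2} (e cos s)/(1 + e cos s) ds = π - (4/√(1-e²)) arctan √((1-e)/(1+e))`. -/
theorem stmt_8 (e : ℝ) (h0 : 0 ≤ e) (h1 : e < 1) :
    ∫ s in (-(Real.pi / 2))..(Real.pi / 2), (e * Real.cos s) / (1 + e * Real.cos s) =
      Real.pi - 4 / Real.sqrt (1 - e ^ 2) * Real.arctan (Real.sqrt ((1 - e) / (1 + e))) := by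
  have he : |e| < 1 := abs_lt.mpr ⟨by linarith, h1⟩
  have hsplit : ∀ s, e * cos s / (1 + e * cos s) = 1 - 1 / (1 + e * cos s) := fun s => by
    field_simp [(one_add_mul_cos_pos he s).ne']
    ring
  simp_rw [hsplit]
  rw [integral_sub intervalIntegrable_const
    ((continuous_one_div_one_add_mul_cos he).intervalIntegrable _ _),
    integral_one_div_one_add_mul_cos he, integral_const]
  simp only [smul_eq_mul, mul_one]
  ring
end

section
/- Let F be a compact operator (or an n×n matrix) on a Hilbert space, and suppose 1/λ₀ is a nonzero eigenvalue of F with algebraic multiplicity k. Then λ₀ is a zero of the entire function λ ↦ det(id − λF) of order exactly k. (Matrix version: for F ∈ M(n,ℂ), λ₀ is a zero of det(I − λF) of order k iff 1/λ₀ is an eigenvalue of F of algebraic multiplicity k.) -/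
/-! `det (1 - X • F)` is the reversal `X ^ n * χ_F (1 / X)` of the characteristic polynomial.
Reversal is multiplicative over a domain and turns `X - C b` into `C (-b) * (X - C b⁻¹)` for
`b ≠ 0`, so it moves a root `b ≠ 0` to `b⁻¹` with the same multiplicity. -/

open Polynomial

namespace Polynomial

theorem reverse_pow {R : Type*} [Semiring R] [NoZeroDivisors R] (p : R[X]) (n : ℕ) :
    (p ^ n).reverse = p.reverse ^ n := by
  induction n with
  | zero => simpa using reverse_C (1 : R)
  | succ n ih => rw [pow_succ, reverse_mul_of_domain, ih, pow_succ]

theorem reverse_X_sub_C {R : Type*} [Ring R] (b : R) : (X - C b).reverse = 1 - C b * X := by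
  nontriviality R
  rw [reverse, natDegree_X_sub_C, reflect_sub, reflect_one_X, reflect_C, pow_one]

theorem isRoot_reverse_iff {K : Type*} [Field K] {a : K} (ha : a ≠ 0) (p : K[X]) :
    p.reverse.IsRoot a ↔ p.IsRoot a⁻¹ := by
  let := invertibleOfNonzero (inv_ne_zero ha)
  simpa [IsRoot, eval₂_id] using eval₂_reverse_eq_zero_iff (RingHom.id K) a⁻¹ p

theorem rootMultiplicity_reverse {K : Type*} [Field K] {a : K} (ha : a ≠ 0) (p : K[X]) :
    p.reverse.rootMultiplicity a = p.rootMultiplicity a⁻¹ := by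
  rcases eq_or_ne p 0 with rfl | hp
  · simp
  obtain ⟨q, hpq, hq⟩ := exists_eq_pow_rootMultiplicity_mul_and_not_dvd p hp a⁻¹
  have hq0 : q ≠ 0 := by rintro rfl; simp at hq
  have hqa : ¬ q.reverse.IsRoot a := (isRoot_reverse_iff ha q).not.2 (mt dvd_iff_isRoot.2 hq)
  have hfactor : (X - C a⁻¹).reverse = C (-a⁻¹) * (X - C a) := by
    rw [reverse_X_sub_C, mul_sub, ← C_mul, neg_mul, inv_mul_cancel₀ ha]
    simp only [map_neg, C_1]
    ring
  have hc : C ((-a⁻¹) ^ p.rootMultiplicity a⁻¹) ≠ 0 := by simp [ha]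
  have hr : (X - C a) ^ p.rootMultiplicity a⁻¹ * q.reverse ≠ 0 :=
    mul_ne_zero (pow_ne_zero _ (X_sub_C_ne_zero a)) (reverse_eq_zero.not.2 hq0)
  conv_lhs => rw [hpq, reverse_mul_of_domain, reverse_pow, hfactor, mul_pow, ← C_pow, mul_assoc]
  rw [rootMultiplicity_mul (mul_ne_zero hc hr), rootMultiplicity_C, rootMultiplicity_mul hr,
    rootMultiplicity_X_sub_C_pow, rootMultiplicity_eq_zero hqa, zero_add, add_zero]

end Polynomial

/-- Matrix version of the order-of-vanishing statement: for `F ∈ M(n,ℂ)` and `λ₀ ≠ 0`,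
the order of `λ₀` as a zero of `λ ↦ det(I - λF)` equals the algebraic multiplicity of
`1/λ₀` as an eigenvalue of `F` (the multiplicity of `1/λ₀` as a root of the
characteristic polynomial). -/
theorem stmt_15 {n : ℕ} (F : Matrix (Fin n) (Fin n) ℂ) (l : ℂ) (hl : l ≠ 0) :
    Polynomial.rootMultiplicity l
        (Matrix.det ((1 : Matrix (Fin n) (Fin n) (Polynomial ℂ)) -
          (Polynomial.X : Polynomial ℂ) • F.map Polynomial.C)) =
      Polynomial.rootMultiplicity l⁻¹ (Matrix.charpoly F) := by
  rw [← rootMultiplicity_reverse hl, Matrix.reverse_charpoly, Matrix.charpolyRev]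
end

section
/- Let S̄ ∈ O(n), ω ∈ ℂ not an eigenvalue of S̄, and R : [0,T] → S(n) continuous. With γ₀(t) = [[I_n,0],[tI_n,I_n]], M = diag(S̄,S̄)·γ₀(T), and G₁ = J∫_0^T γ₀(t)ᵀ [[0,0],[0,R(t)]] γ₀(t) dt · M(M − ωI_{2n})^{−1}, one has Tr(G₁) = ω · Tr( T ∫_0^T R(t)dt · S̄ᵀ (I_n − ω S̄ᵀ)^{−2} ). -/
/-!
Conjugating `[[0,0],[0,R]]` by the shear `γ₀(t)` gives `[[t²R, tR],[tR, R]]`, so the two diagonal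
blocks of `J ∫ γ₀ᵀ D γ₀` are `∓∫ tR`. The matrix `M - ω` is block lower triangular with both
diagonal blocks `S̄ - ω`, hence so is `M (M - ω)⁻¹ = 1 + ω (M - ω)⁻¹`, with equal diagonal blocks
and lower-left block `-ωT E S̄ E`, `E = (S̄ - ω)⁻¹`. In the trace of the product the diagonal
contributions cancel and only `-Tr (∫R ⋅ (-ωT E S̄ E))` survives. Orthogonality of `S̄` gives
`1 - ωS̄ᵀ = (S̄ - ω) S̄ᵀ`, hence `S̄ᵀ (1 - ωS̄ᵀ)⁻² = E S̄ E`.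
-/

open Matrix

attribute [local instance] Matrix.normedAddCommGroup Matrix.normedSpace

namespace Matrix

theorem trace_fromBlocks {m n α : Type*} [Fintype m] [Fintype n] [AddCommMonoid α]
    (A : Matrix m m α) (B : Matrix m n α) (C : Matrix n m α) (D : Matrix n n α) :
    trace (fromBlocks A B C D) = trace A + trace D := by
  simp [trace, Fintype.sum_sum_type]

section Blocks

variable {m K : Type*} [DecidableEq m] [CommRing K]

theorem fromBlocks_zero₁₂_sub_smul_one (A C : Matrix m m K) (ω : K) :
    fromBlocks A 0 C A - ω • 1 = fromBlocks (A - ω • 1) 0 C (A - ω • 1) := by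
  rw [← fromBlocks_one, fromBlocks_smul, sub_eq_add_neg, fromBlocks_neg, fromBlocks_add]
  simp [sub_eq_add_neg]

variable [Fintype m]

theorem mul_inv_sub_smul_one {X : Matrix m m K} {ω : K} (h : IsUnit (X - ω • 1)) :
    X * (X - ω • 1)⁻¹ = 1 + ω • (X - ω • 1)⁻¹ := by
  calc X * (X - ω • 1)⁻¹ = (X - ω • 1 + ω • 1) * (X - ω • 1)⁻¹ := by rw [sub_add_cancel]
    _ = 1 + ω • (X - ω • 1)⁻¹ := by
      rw [add_mul, mul_nonsing_inv _ ((isUnit_iff_isUnit_det _).mp h), smul_mul, Matrix.one_mul]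

theorem fromBlocks_zero₁₂_mul_inv_sub_smul_one {A C : Matrix m m K} {ω : K}
    (h : IsUnit (fromBlocks A 0 C A - ω • 1)) :
    fromBlocks A 0 C A * (fromBlocks A 0 C A - ω • 1)⁻¹ =
      fromBlocks (1 + ω • (A - ω • 1)⁻¹) 0
        (-(ω • ((A - ω • 1)⁻¹ * C * (A - ω • 1)⁻¹))) (1 + ω • (A - ω • 1)⁻¹) := by
  rw [mul_inv_sub_smul_one h, fromBlocks_zero₁₂_sub_smul_one,
    inv_fromBlocks_zero₁₂_of_isUnit_iff _ _ _ Iff.rfl, ← fromBlocks_one, fromBlocks_smul,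
    fromBlocks_add]
  simp

theorem trace_J_mul_fromBlocks_mul_fromBlocks_zero₁₂ (X Y W P Q : Matrix m m K) :
    trace (J m K * fromBlocks X Y Y W * fromBlocks P 0 Q P) = -trace (W * Q) := by
  simp [J, fromBlocks_multiply, trace_fromBlocks]

theorem transpose_mul_inv_one_sub_smul_transpose_sq {S : Matrix m m K} (hS : Sᵀ * S = 1) (ω : K) :
    Sᵀ * ((1 - ω • Sᵀ)⁻¹ * (1 - ω • Sᵀ)⁻¹) = (S - ω • 1)⁻¹ * S * (S - ω • 1)⁻¹ := by
  have hfac : 1 - ω • Sᵀ = (S - ω • 1) * Sᵀ := by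
    rw [Matrix.sub_mul, mul_eq_one_comm.mp hS, smul_mul, Matrix.one_mul]
  rw [hfac, mul_inv_rev, inv_eq_right_inv hS]
  simp only [← mul_assoc, hS, Matrix.one_mul]

theorem lowerShear_transpose_mul_mul (t : K) (D : Matrix m m K) :
    (fromBlocks 1 0 (t • 1) 1)ᵀ * fromBlocks 0 0 0 D * fromBlocks 1 0 (t • 1) 1 =
      fromBlocks ((t * t) • D) (t • D) (t • D) D := by
  simp [fromBlocks_transpose, fromBlocks_multiply, smul_smul]

end Blocks

section Integral

variable {m n : Type*} [Fintype m] [Fintype n]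

theorem intervalIntegral_apply {f : ℝ → Matrix m n ℝ} (hf : Continuous f) (a b : ℝ) (i : m)
    (j : n) : (∫ t in a..b, f t) i j = ∫ t in a..b, f t i j :=
  ((entryLinearMap ℝ ℝ i j).toContinuousLinearMap.intervalIntegral_comp_comm
    (hf.intervalIntegrable a b)).symm

theorem intervalIntegral_fromBlocks {f : ℝ → Matrix m m ℝ} {g : ℝ → Matrix m n ℝ}
    {h : ℝ → Matrix n m ℝ} {k : ℝ → Matrix n n ℝ}
    (hf : Continuous f) (hg : Continuous g) (hh : Continuous h) (hk : Continuous k) (a b : ℝ) :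
    ∫ t in a..b, fromBlocks (f t) (g t) (h t) (k t) =
      fromBlocks (∫ t in a..b, f t) (∫ t in a..b, g t) (∫ t in a..b, h t) (∫ t in a..b, k t) := by
  ext (i | i) (j | j) <;>
    simp [intervalIntegral_apply (hf.matrix_fromBlocks hg hh hk), intervalIntegral_apply hf,
      intervalIntegral_apply hg, intervalIntegral_apply hh, intervalIntegral_apply hk]

end Integral

end Matrix

theorem stmt_17_general {n : ℕ} (T : ℝ) (ω : ℂ)
    (S : Matrix (Fin n) (Fin n) ℝ) (hS : Sᵀ * S = 1)
    (R : ℝ → Matrix (Fin n) (Fin n) ℝ)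
    (hR : Continuous R)
    (J : Matrix (Fin n ⊕ Fin n) (Fin n ⊕ Fin n) ℝ)
    (hJ : J = Matrix.fromBlocks 0 (-1) 1 0)
    (γ : ℝ → Matrix (Fin n ⊕ Fin n) (Fin n ⊕ Fin n) ℝ)
    (hγ : γ = fun t => Matrix.fromBlocks 1 0 (t • 1) 1)
    (M : Matrix (Fin n ⊕ Fin n) (Fin n ⊕ Fin n) ℂ)
    (hM : M = (Matrix.fromBlocks S 0 0 S * γ T).map (algebraMap ℝ ℂ))
    (hω : IsUnit (M - ω • 1))
    (G₁ : Matrix (Fin n ⊕ Fin n) (Fin n ⊕ Fin n) ℂ)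
    (hG₁ : G₁ = (J * ∫ t in (0 : ℝ)..T,
        (γ t)ᵀ * Matrix.fromBlocks 0 0 0 (R t) * γ t).map (algebraMap ℝ ℂ) *
      (M * (M - ω • 1)⁻¹)) :
    Matrix.trace G₁ =
      ω * Matrix.trace ((T : ℂ) •
        ((∫ t in (0 : ℝ)..T, R t).map (algebraMap ℝ ℂ) *
          ((S.map (algebraMap ℝ ℂ))ᵀ *
            ((1 - ω • (S.map (algebraMap ℝ ℂ))ᵀ)⁻¹ *
              (1 - ω • (S.map (algebraMap ℝ ℂ))ᵀ)⁻¹)))) := by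
  set Sc := S.map (algebraMap ℝ ℂ)
  have hSc : Scᵀ * Sc = 1 := by
    rw [← transpose_map, ← Matrix.map_mul, hS, Matrix.map_one _ (map_zero _) (map_one _)]
  have hMblocks : M = fromBlocks Sc 0 ((T : ℂ) • Sc) Sc := by
    rw [hM, hγ, fromBlocks_multiply]
    simp only [fromBlocks_map, Sc]
    ext (i | i) (j | j) <;> simp
  have hintegral : ∫ t in (0 : ℝ)..T, (γ t)ᵀ * fromBlocks 0 0 0 (R t) * γ t =
      fromBlocks (∫ t in (0 : ℝ)..T, (t * t) • R t) (∫ t in (0 : ℝ)..T, t • R t)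
        (∫ t in (0 : ℝ)..T, t • R t) (∫ t in (0 : ℝ)..T, R t) := by
    simp_rw [hγ, lowerShear_transpose_mul_mul]
    exact intervalIntegral_fromBlocks ((continuous_id.mul continuous_id).smul hR)
      (continuous_id.smul hR) (continuous_id.smul hR) hR 0 T
  rw [hMblocks] at hω
  rw [hG₁, hMblocks, hintegral, show J = Matrix.J (Fin n) ℝ from hJ, Matrix.map_mul, map_J,
    fromBlocks_map, fromBlocks_zero₁₂_mul_inv_sub_smul_one hω,
    trace_J_mul_fromBlocks_mul_fromBlocks_zero₁₂,
    transpose_mul_inv_one_sub_smul_transpose_sq hSc]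
  simp [trace_smul, mul_assoc]

/-- Let `S̄ ∈ O(n)`, `ω ∈ ℂ`, `R : [0,T] → S(n)` continuous. With
`γ₀(t) = [[I,0],[tI,I]]`, `M = diag(S̄,S̄) γ₀(T)` and
`G₁ = J ∫_0^T γ₀ᵀ [[0,0],[0,R]] γ₀ dt ⋅ M (M - ωI)⁻¹`, if `ω` is not an eigenvalue of
`M` then `Tr G₁ = ω Tr( T ∫_0^T R dt ⋅ S̄ᵀ (I - ω S̄ᵀ)⁻² )`. -/
theorem stmt_17 {n : ℕ} (T : ℝ) (ω : ℂ)
    (S : Matrix (Fin n) (Fin n) ℝ) (hS : Sᵀ * S = 1)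
    (R : ℝ → Matrix (Fin n) (Fin n) ℝ)
    (hR : Continuous R) (hRsym : ∀ t, (R t).IsSymm)
    (J : Matrix (Fin n ⊕ Fin n) (Fin n ⊕ Fin n) ℝ)
    (hJ : J = Matrix.fromBlocks 0 (-1) 1 0)
    (γ : ℝ → Matrix (Fin n ⊕ Fin n) (Fin n ⊕ Fin n) ℝ)
    (hγ : γ = fun t => Matrix.fromBlocks 1 0 (t • 1) 1)
    (M : Matrix (Fin n ⊕ Fin n) (Fin n ⊕ Fin n) ℂ)
    (hM : M = (Matrix.fromBlocks S 0 0 S * γ T).map (algebraMap ℝ ℂ))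
    (hω : IsUnit (M - ω • 1))
    (G₁ : Matrix (Fin n ⊕ Fin n) (Fin n ⊕ Fin n) ℂ)
    (hG₁ : G₁ = (J * ∫ t in (0 : ℝ)..T,
        (γ t)ᵀ * Matrix.fromBlocks 0 0 0 (R t) * γ t).map (algebraMap ℝ ℂ) *
      (M * (M - ω • 1)⁻¹)) :
    Matrix.trace G₁ =
      ω * Matrix.trace ((T : ℂ) •
        ((∫ t in (0 : ℝ)..T, R t).map (algebraMap ℝ ℂ) *
          ((S.map (algebraMap ℝ ℂ))ᵀ *
            ((1 - ω • (S.map (algebraMap ℝ ℂ))ᵀ)⁻¹ *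
              (1 - ω • (S.map (algebraMap ℝ ℂ))ᵀ)⁻¹)))) :=
  stmt_17_general T ω S hS R hR J hJ γ hγ M hM hω G₁ hG₁
end

section
/- Let ν ∈ ℝ, α ∈ ℝ with cosh ν ≠ cos α. Then the symmetric limit lim_{N→∞} Σ_{|k|≤N} [1/(2kπ + √−1 ν − α) + 1/(2kπ − √−1 ν − α)] = −2e^ν sin α / ((cos α − e^ν)² + sin² α). -/
/-!
At `u = α ∓ iν` the two sums are symmetric partial sums of the partial-fraction expansion
`∑_{|k| ≤ N} 1 / (u - 2kπ) → cot (u / 2) / 2` (the Mittag-Leffler series of `π cot (π x)`).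
Neither point is a pole, because `2 sin ((α - iν) / 2) sin ((α + iν) / 2) = cosh ν - cos α ≠ 0`.
Adding the two cotangents gives `-sin α / (cosh ν - cos α)`, which is the claimed value since
`(cos α - e^ν)² + sin² α = 2 e^ν (cosh ν - cos α)`.
-/

open Filter Topology Complex
open scoped Real

lemma sum_Icc_one_div_sub_intCast_eq (x : ℂ) (N : ℕ) :
    ∑ k ∈ Finset.Icc (-(N : ℤ)) N, 1 / (x - k) = 1 / x + ∑ j ∈ Finset.range N, cotTerm x j := by
  induction N with
  | zero => simp
  | succ N ih =>
    rw [Nat.cast_succ, Finset.sum_Icc_succ_eq_add_endpoints, ih, Finset.sum_range_succ, cotTerm]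
    push_cast
    ring_nf

lemma tendsto_sum_Icc_one_div_sub_intCast {x : ℂ} (hx : x ∈ integerComplement) :
    Tendsto (fun N : ℕ ↦ ∑ k ∈ Finset.Icc (-(N : ℤ)) N, 1 / (x - k)) atTop
      (𝓝 (π * cot (π * x))) := by
  have h := (tendsto_logDeriv_euler_cot_sub hx).const_add (1 / x)
  rw [add_sub_cancel] at h
  exact h.congr fun N ↦ (sum_Icc_one_div_sub_intCast_eq x N).symm

lemma tendsto_sum_Icc_one_div_sub_two_pi_mul {u : ℂ} (hu : sin (u / 2) ≠ 0) :
    Tendsto (fun N : ℕ ↦ ∑ k ∈ Finset.Icc (-(N : ℤ)) N, 1 / (u - 2 * k * π)) atTop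
      (𝓝 (cot (u / 2) / 2)) := by
  have hπ : (π : ℂ) ≠ 0 := ofReal_ne_zero.mpr Real.pi_ne_zero
  have hx : u / (2 * π) ∈ integerComplement := by
    rintro ⟨n, hn⟩
    refine hu ?_
    rw [show u / 2 = n * π by rw [hn]; field_simp, sin_int_mul_pi]
  have hlim : π * (u / (2 * π)) = u / 2 := by field_simp
  convert (tendsto_sum_Icc_one_div_sub_intCast hx).const_mul (1 / (2 * π : ℂ)) using 2 with N
  · rw [Finset.mul_sum]
    refine Finset.sum_congr rfl fun k _ ↦ ?_
    rw [one_div_mul_one_div, mul_sub, mul_div_cancel₀ _ (mul_ne_zero two_ne_zero hπ)]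
    ring_nf
  · rw [hlim]
    field_simp

lemma Complex.two_mul_sin_mul_sin (x y : ℂ) : 2 * sin x * sin y = cos (x - y) - cos (x + y) := by
  rw [cos_sub, cos_add]
  ring

lemma Complex.cot_add_cot {a b : ℂ} (ha : sin a ≠ 0) (hb : sin b ≠ 0) :
    cot a + cot b = sin (a + b) / (sin a * sin b) := by
  rw [cot_eq_cos_div_sin, cot_eq_cos_div_sin, sin_add]
  field_simp
  ring

lemma Real.cos_sub_exp_sq_add_sin_sq (ν α : ℝ) :
    (Real.cos α - Real.exp ν) ^ 2 + Real.sin α ^ 2 = 2 * Real.exp ν * (Real.cosh ν - Real.cos α) := by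
  rw [Real.cosh_eq, Real.exp_neg]
  field_simp
  linear_combination Real.sin_sq_add_cos_sq α

/-- For real `ν, α` with `cosh ν ≠ cos α`, the symmetric partial sums
`∑_{|k| ≤ N} [1/(2kπ + iν - α) + 1/(2kπ - iν - α)]` converge, as `N → ∞`, to
`-2 e^ν sin α / ((cos α - e^ν)² + sin² α)`. -/
theorem stmt_19 (ν α : ℝ) (h : Real.cosh ν ≠ Real.cos α) :
    Filter.Tendsto
      (fun N : ℕ => ∑ k ∈ Finset.Icc (-(N : ℤ)) (N : ℤ),
        ((1 : ℂ) / (2 * (k : ℂ) * Real.pi + Complex.I * ν - α) +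
          1 / (2 * (k : ℂ) * Real.pi - Complex.I * ν - α)))
      Filter.atTop
      (nhds (((-2 * Real.exp ν * Real.sin α /
        ((Real.cos α - Real.exp ν) ^ 2 + Real.sin α ^ 2) : ℝ) : ℂ))) := by
  have hsin : 2 * sin ((α - I * ν) / 2) * sin ((α + I * ν) / 2) = cosh ν - cos α := by
    rw [two_mul_sin_mul_sin, ← cos_mul_I, ← cos_neg (ν * I)]
    congr 2 <;> ring
  have hcosh : (cosh ν - cos α : ℂ) ≠ 0 := by exact_mod_cast sub_ne_zero.mpr h
  rw [← hsin] at hcosh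
  have h₁ : sin ((α - I * ν) / 2) ≠ 0 := fun h0 ↦ hcosh (by simp [h0])
  have h₂ : sin ((α + I * ν) / 2) ≠ 0 := fun h0 ↦ hcosh (by simp [h0])
  convert (tendsto_sum_Icc_one_div_sub_two_pi_mul h₁).neg.add
    (tendsto_sum_Icc_one_div_sub_two_pi_mul h₂).neg using 2 with N
  · rw [← Finset.sum_neg_distrib, ← Finset.sum_neg_distrib, ← Finset.sum_add_distrib]
    refine Finset.sum_congr rfl fun k _ ↦ ?_
    rw [← div_neg, ← div_neg]
    ring_nf
  · rw [Real.cos_sub_exp_sq_add_sin_sq]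
    push_cast
    rw [← hsin, ← neg_add, ← add_div, cot_add_cot h₁ h₂, ← add_div,
      show (α - I * ν + (α + I * ν) : ℂ) / 2 = α by ring]
    field_simp
end
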